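/- arXiv:math/9808144 — 6 statements merged into one kernel-verified Lean document; each statement's English description precedes it below -/
import Mathlib

section
/- Let O_K be a discrete valuation ring with maximal ideal ℘, α integral over O_K with monic minimal polynomial h, Λ = O_K[α], β ∈ O_K, and suppose h₀ = X - β reduces mod ℘ to an irreducible factor of h mod ℘. Then the prime Q = (℘, α - β) of Λ is not invertible if and only if h(β) ≡ 0 mod ℘² and h'(β) ≡ 0 mod ℘. -/
/-!
Write `h = (X - β) q + h(β)` and `t = α - β`, so that `t q(α) = -h(β)` and `q(β) = h'(β)`.
Evaluation at `β` modulo `℘` identifies `Λ / Q` with the residue field, so `Q` is maximal;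
with a uniformizer `π`, `Q = (π, t)` and `h(β) = π d`. The element `x = q(α) / π` satisfies
`x Q = (q(α), d)`. If `q(α)` or `d` lies outside `Q`, then `Q (1 + x) = Λ`. Otherwise
`x Q ⊆ Q`, and invertibility of `Q` would put `x` in `Λ`; but `q` is monic of degree
`deg h - 1`, so `h ∤ q` modulo `℘` and `π ∤ q(α)`. Finally `d ∈ ℘ ↔ h(β) ∈ ℘²`.
-/

open Polynomial IsLocalRing
open scoped nonZeroDivisors

namespace Polynomial

variable {R : Type*} [CommRing R]

theorem X_sub_C_mul_divByMonic_add_C_eval (f : R[X]) (b : R) :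
    (X - C b) * (f /ₘ (X - C b)) + C (f.eval b) = f := by
  rw [X_sub_C_mul_divByMonic_eq_sub_modByMonic, modByMonic_X_sub_C_eq_C_eval, sub_add_cancel]

theorem eval_divByMonic_X_sub_C_self (f : R[X]) (b : R) :
    (f /ₘ (X - C b)).eval b = f.derivative.eval b := by
  simpa using congrArg (eval b)
    (divByMonic_add_X_sub_C_mul_derivative_divByMonic_eq_derivative f b)

theorem Monic.not_dvd_divByMonic_X_sub_C [Nontrivial R] {f : R[X]} (hf : f.Monic)
    (hdeg : 0 < f.natDegree) (b : R) : ¬ f ∣ f /ₘ (X - C b) := by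
  refine hf.not_dvd_of_natDegree_lt ?_ ?_
  · rw [Ne, divByMonic_eq_zero_iff (monic_X_sub_C b), degree_X_sub_C, not_lt,
      degree_eq_natDegree hf.ne_zero]
    exact_mod_cast hdeg
  · rw [natDegree_divByMonic _ (monic_X_sub_C b), natDegree_X_sub_C]
    omega

theorem eval_mem_ker_of_map_X_sub_C_dvd {k : Type*} [CommRing k] {φ : R →+* k} {f : R[X]}
    {b : R} (h : (X - C b).map φ ∣ f.map φ) : f.eval b ∈ RingHom.ker φ := by
  rwa [Polynomial.map_sub, map_X, map_C, dvd_iff_isRoot, IsRoot, eval_map, eval₂_hom] at h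

end Polynomial

namespace IsAdjoinRoot

variable {R S : Type*} [CommRing R] [CommRing S] [Algebra R S] {f : R[X]} (hS : IsAdjoinRoot S f)
  {P : Ideal R} {β : R}

def evalIdeal (P : Ideal R) (β : R) : Ideal S :=
  P.map (algebraMap R S) ⊔ Ideal.span {hS.root - algebraMap R S β}

noncomputable def evalQuotient (hβ : f.eval β ∈ P) : S →+* R ⧸ P :=
  hS.lift (Ideal.Quotient.mk P) (Ideal.Quotient.mk P β)
    (by rwa [eval₂_hom, Ideal.Quotient.eq_zero_iff_mem])

theorem evalQuotient_map (hβ : f.eval β ∈ P) (g : R[X]) :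
    hS.evalQuotient hβ (hS.map g) = Ideal.Quotient.mk P (g.eval β) := by
  rw [evalQuotient, lift_map, eval₂_hom]

theorem ker_evalQuotient (hβ : f.eval β ∈ P) :
    RingHom.ker (hS.evalQuotient hβ) = hS.evalIdeal P β := by
  apply le_antisymm
  · intro s hs
    obtain ⟨g, rfl⟩ := hS.map_surjective s
    rw [RingHom.mem_ker, evalQuotient_map, Ideal.Quotient.eq_zero_iff_mem] at hs
    rw [← X_sub_C_mul_divByMonic_add_C_eval g β, map_add, map_mul, map_sub, map_X,
      ← algebraMap_apply, ← algebraMap_apply]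
    exact Ideal.add_mem _ (Ideal.mem_sup_right (Ideal.mul_mem_right _ _
      (Ideal.subset_span rfl))) (Ideal.mem_sup_left (Ideal.mem_map_of_mem _ hs))
  · refine sup_le (Ideal.map_le_iff_le_comap.mpr fun r hr => ?_) (Ideal.span_le.mpr ?_)
    · rw [Ideal.mem_comap, RingHom.mem_ker, algebraMap_apply, evalQuotient_map, eval_C,
        Ideal.Quotient.eq_zero_iff_mem]
      exact hr
    · rintro _ rfl
      rw [SetLike.mem_coe, RingHom.mem_ker, algebraMap_apply, ← map_X hS, ← map_sub,
        evalQuotient_map]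
      simp

theorem map_mem_evalIdeal_iff (hβ : f.eval β ∈ P) {g : R[X]} :
    hS.map g ∈ hS.evalIdeal P β ↔ g.eval β ∈ P := by
  rw [← ker_evalQuotient hS hβ, RingHom.mem_ker, evalQuotient_map,
    Ideal.Quotient.eq_zero_iff_mem]

theorem evalIdeal_isMaximal (hβ : f.eval β ∈ P) [P.IsMaximal] :
    (hS.evalIdeal P β).IsMaximal := by
  let := Ideal.Quotient.field P
  rw [← ker_evalQuotient hS hβ]
  refine RingHom.ker_isMaximal_of_surjective (hS.evalQuotient hβ) fun x => ?_
  obtain ⟨r, rfl⟩ := Ideal.Quotient.mk_surjective x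
  exact ⟨algebraMap R S r, by rw [algebraMap_apply, evalQuotient_map, eval_C]⟩

theorem map_dvd_map_of_algebraMap_dvd {r : R} (hr : r ∈ P) {g : R[X]}
    (h : algebraMap R S r ∣ hS.map g) :
    f.map (Ideal.Quotient.mk P) ∣ g.map (Ideal.Quotient.mk P) := by
  obtain ⟨z, hz⟩ := h
  obtain ⟨w, rfl⟩ := hS.map_surjective z
  obtain ⟨k, hk⟩ : f ∣ g - C r * w := by
    rw [← map_eq_zero_iff hS, map_sub, map_mul, ← algebraMap_apply, hz, sub_self]
  refine ⟨k.map (Ideal.Quotient.mk P), ?_⟩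
  have hrP : Ideal.Quotient.mk P r = 0 := Ideal.Quotient.eq_zero_iff_mem.mpr hr
  simpa [hrP] using congrArg (Polynomial.map (Ideal.Quotient.mk P)) hk

end IsAdjoinRoot

namespace IsAdjoinRootMonic

section

variable {R S : Type*} [CommRing R] [CommRing S] [Nontrivial S] [Algebra R S] {f : R[X]}

theorem algebraMap_ne_zero (hS : IsAdjoinRootMonic S f) {r : R} (hr : r ≠ 0) :
    algebraMap R S r ≠ 0 := by
  rw [hS.toIsAdjoinRoot.algebraMap_apply, Ne, IsAdjoinRoot.map_eq_zero_iff]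
  exact hS.monic.not_dvd_of_natDegree_lt (C_ne_zero.mpr hr) (natDegree_C r ▸ hS.deg_pos)

theorem not_algebraMap_dvd_map_divByMonic (hS : IsAdjoinRootMonic S f) {P : Ideal R}
    (hP : P ≠ ⊤) {r : R} (hr : r ∈ P) (β : R) :
    ¬ algebraMap R S r ∣ hS.map (f /ₘ (X - C β)) := by
  have : Nontrivial (R ⧸ P) := Ideal.Quotient.nontrivial_iff.mpr hP
  intro h
  have hdvd := hS.map_dvd_map_of_algebraMap_dvd hr h
  rw [map_divByMonic _ (monic_X_sub_C β), Polynomial.map_sub, map_X, map_C] at hdvd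
  exact (hS.monic.map _).not_dvd_divByMonic_X_sub_C
    (by rw [hS.monic.natDegree_map]; exact hS.deg_pos) _ hdvd

end

section

variable {R L : Type*} [CommRing R] [IsDomain R] [IsIntegrallyClosed R] [CommRing L] [IsDomain L]
  [Algebra R L] [Module.IsTorsionFree R L] {α : L}

noncomputable def adjoinSingleton (hα : IsIntegral R α) :
    IsAdjoinRootMonic (Algebra.adjoin R {α}) (minpoly R α) where
  map := aeval ⟨α, Algebra.self_mem_adjoin_singleton R α⟩
  map_surjective z := by
    obtain ⟨g, hg⟩ : (z : L) ∈ (aeval (R := R) α).range := by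
      rw [← Algebra.adjoin_singleton_eq_range_aeval]
      exact z.2
    exact ⟨g, Subtype.ext (by rw [aeval_subalgebra_coe]; exact hg)⟩
  ker_map := by
    ext g
    rw [RingHom.mem_ker, Ideal.mem_span_singleton, ← minpoly.isIntegrallyClosed_dvd_iff hα,
      ← ZeroMemClass.coe_eq_zero, aeval_subalgebra_coe]
  monic := minpoly.monic hα

theorem adjoinSingleton_root (hα : IsIntegral R α) :
    (adjoinSingleton hα).root = ⟨α, Algebra.self_mem_adjoin_singleton R α⟩ :=
  aeval_X _

end

end IsAdjoinRootMonic

namespace FractionalIdeal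

variable {S K : Type*} [CommRing S] [IsDomain S] [Field K] [Algebra S K] [IsFractionRing S K]

theorem spanSingleton_div_mul_coeIdeal_span_pair {p t u v : S} (hp : p ≠ 0)
    (htu : t * u = p * v) :
    spanSingleton S⁰ (algebraMap S K u / algebraMap S K p) * (Ideal.span {p, t} : Ideal S) =
      ((Ideal.span {u, v} : Ideal S) : FractionalIdeal S⁰ K) := by
  have hp' : algebraMap S K p ≠ 0 := IsFractionRing.to_map_ne_zero_of_mem_nonZeroDivisors
    (mem_nonZeroDivisors_of_ne_zero hp)
  have hv : algebraMap S K u / algebraMap S K p * algebraMap S K t = algebraMap S K v := by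
    rw [div_mul_eq_mul_div, div_eq_iff hp', ← map_mul, ← map_mul, mul_comm u, htu, mul_comm]
  rw [Ideal.span_insert, Ideal.span_insert, coeIdeal_sup, coeIdeal_sup,
    coeIdeal_span_singleton, coeIdeal_span_singleton, coeIdeal_span_singleton,
    coeIdeal_span_singleton, mul_add, spanSingleton_mul_spanSingleton,
    spanSingleton_mul_spanSingleton, div_mul_cancel₀ _ hp', hv]

theorem not_isUnit_coeIdeal_span_pair_iff {p t u v : S} (hp : p ≠ 0) (htu : t * u = p * v)
    (hmax : (Ideal.span {p, t}).IsMaximal) (hpu : ¬ p ∣ u) :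
    ¬ IsUnit ((Ideal.span {p, t} : Ideal S) : FractionalIdeal S⁰ K) ↔
      u ∈ Ideal.span {p, t} ∧ v ∈ Ideal.span {p, t} := by
  set I := Ideal.span {p, t}
  set x := algebraMap S K u / algebraMap S K p
  have hx := spanSingleton_div_mul_coeIdeal_span_pair (K := K) hp htu
  have hp' : algebraMap S K p ≠ 0 := IsFractionRing.to_map_ne_zero_of_mem_nonZeroDivisors
    (mem_nonZeroDivisors_of_ne_zero hp)
  constructor
  · intro hI
    by_contra huv
    have htop : I ⊔ Ideal.span {u, v} = ⊤ := by
      by_contra hne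
      refine huv ⟨?_, ?_⟩ <;>
      · rw [hmax.eq_of_le hne le_sup_left]
        exact Ideal.mem_sup_right (Ideal.subset_span (by simp))
    refine hI (IsUnit.of_mul_eq_one (1 + spanSingleton S⁰ x) ?_)
    rw [mul_add, mul_one, mul_comm, hx, ← coeIdeal_sup, htop, coeIdeal_top]
  · rintro ⟨hu, hv⟩ ⟨I', hI'⟩
    have hle : spanSingleton S⁰ x ≤ 1 :=
      calc spanSingleton S⁰ x
        _ = spanSingleton S⁰ x * (I : FractionalIdeal S⁰ K) * ↑I'⁻¹ := by
          rw [mul_assoc, ← hI', Units.mul_inv, mul_one]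
        _ ≤ (I : FractionalIdeal S⁰ K) * ↑I'⁻¹ := by
          rw [hx]
          gcongr
          exact Ideal.span_le.mpr (Set.insert_subset hu (Set.singleton_subset_iff.mpr hv))
        _ = 1 := by rw [← hI', Units.mul_inv]
    obtain ⟨z, hz⟩ := (mem_one_iff S⁰).mp (hle (mem_spanSingleton_self _ x))
    refine hpu ⟨z, IsFractionRing.injective S K ?_⟩
    rw [map_mul, hz, mul_div_cancel₀ _ hp']

end FractionalIdeal

theorem IsAdjoinRootMonic.not_isUnit_coeIdeal_evalIdeal_iff {R S K : Type*} [CommRing R]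
    [IsDomain R] [IsDiscreteValuationRing R] [CommRing S] [IsDomain S] [Algebra R S] [Field K]
    [Algebra S K] [IsFractionRing S K] {f : R[X]} (hS : IsAdjoinRootMonic S f) {β : R}
    (hβ : f.eval β ∈ maximalIdeal R) :
    ¬ IsUnit ((hS.evalIdeal (maximalIdeal R) β : Ideal S) : FractionalIdeal S⁰ K) ↔
      f.eval β ∈ maximalIdeal R ^ 2 ∧ f.derivative.eval β ∈ maximalIdeal R := by
  obtain ⟨π, hπ⟩ := IsDiscreteValuationRing.exists_irreducible R
  have hm := (IsDiscreteValuationRing.irreducible_iff_uniformizer π).mp hπ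
  obtain ⟨d, hd⟩ : π ∣ f.eval β := by rwa [hm, Ideal.mem_span_singleton] at hβ
  set t := hS.root - algebraMap R S β
  have hQ : hS.evalIdeal (maximalIdeal R) β = Ideal.span {algebraMap R S π, t} := by
    rw [IsAdjoinRoot.evalIdeal, hm, Ideal.map_span, Set.image_singleton, Ideal.span_insert]
  have htu : t * hS.map (f /ₘ (X - C β)) = algebraMap R S π * hS.map (C (-d)) := by
    have := congrArg hS.map (X_sub_C_mul_divByMonic_add_C_eval f β)
    rw [map_add, map_mul, map_sub, IsAdjoinRoot.map_X, ← IsAdjoinRoot.algebraMap_apply,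
      ← IsAdjoinRoot.algebraMap_apply, IsAdjoinRoot.map_self, hd, map_mul] at this
    rw [← IsAdjoinRoot.algebraMap_apply, map_neg]
    linear_combination this
  have hd2 : d ∈ maximalIdeal R ↔ f.eval β ∈ maximalIdeal R ^ 2 := by
    rw [hd, hm, Ideal.span_singleton_pow, Ideal.mem_span_singleton, Ideal.mem_span_singleton,
      pow_two, mul_dvd_mul_iff_left hπ.ne_zero]
  have hmax := hS.evalIdeal_isMaximal hβ
  rw [hQ] at hmax ⊢
  have hπu := hS.not_algebraMap_dvd_map_divByMonic (maximalIdeal.isMaximal R).ne_top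
    (hm ▸ Ideal.mem_span_singleton_self π) β
  rw [FractionalIdeal.not_isUnit_coeIdeal_span_pair_iff (hS.algebraMap_ne_zero hπ.ne_zero) htu
    hmax hπu, ← hQ, hS.map_mem_evalIdeal_iff hβ, hS.map_mem_evalIdeal_iff hβ,
    eval_divByMonic_X_sub_C_self, eval_C, neg_mem_iff, hd2, and_comm]

/-- Let `O_K` be a discrete valuation ring with maximal ideal `℘`, `α` integral
over `O_K` with monic minimal polynomial `h`, `Λ = O_K[α]`, `β ∈ O_K`, and suppose
`h₀ = X - β` reduces mod `℘` to an irreducible factor of `h` mod `℘`.  Then the prime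
`Q = (℘, α - β)` of `Λ` is not invertible iff `h(β) ≡ 0 mod ℘²` and `h'(β) ≡ 0 mod ℘`. -/
theorem prime_not_invertible_iff_deriv {O_K L : Type*} [CommRing O_K] [IsDomain O_K]
    [IsDiscreteValuationRing O_K] [Field L] [Algebra O_K L] [NoZeroSMulDivisors O_K L]
    (α : L) (hα : IsIntegral O_K α) (β : O_K)
    (hdvd : (X - C β).map (Ideal.Quotient.mk (IsLocalRing.maximalIdeal O_K)) ∣
      (minpoly O_K α).map (Ideal.Quotient.mk (IsLocalRing.maximalIdeal O_K))) :
    ¬ IsUnit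
        (((Ideal.map (algebraMap O_K ↥(Algebra.adjoin O_K ({α} : Set L)))
              (IsLocalRing.maximalIdeal O_K) ⊔
            Ideal.span {(⟨α, Algebra.self_mem_adjoin_singleton O_K α⟩ :
                ↥(Algebra.adjoin O_K ({α} : Set L))) -
              algebraMap O_K ↥(Algebra.adjoin O_K ({α} : Set L)) β}) :
          Ideal ↥(Algebra.adjoin O_K ({α} : Set L))) :
          FractionalIdeal (nonZeroDivisors ↥(Algebra.adjoin O_K ({α} : Set L)))
            (FractionRing ↥(Algebra.adjoin O_K ({α} : Set L)))) ↔
      ((minpoly O_K α).eval β ∈ (IsLocalRing.maximalIdeal O_K) ^ 2 ∧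
        (minpoly O_K α).derivative.eval β ∈ IsLocalRing.maximalIdeal O_K) := by
  have hβ : (minpoly O_K α).eval β ∈ maximalIdeal O_K := by
    simpa using eval_mem_ker_of_map_X_sub_C_dvd hdvd
  rw [← IsAdjoinRootMonic.adjoinSingleton_root hα]
  exact (IsAdjoinRootMonic.adjoinSingleton hα).not_isUnit_coeIdeal_evalIdeal_iff hβ
end

section
/- Let p be a prime, q a non-square power of p, and π = ζ_m^ν √q a supersingular q-number with ℚ(π) = ℚ(π²). Then for every prime v of the ring of integers of ℚ(π) lying over p, the ramification index e(v/p) is even. -/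
open NumberField

/-! A square root `s ∈ F` of `q = p ^ k` is integral, and `(s) ^ 2 = (p) ^ k` as ideals of `𝓞 F`.
Comparing the exponents of a prime `v ∣ p` gives `2 · v(s) = k · e(v/p)`, and `k` is odd because
`q` is not a square, so `e(v/p)` is even. -/

open UniqueFactorizationMonoid in
theorem dvd_ramificationIdx'_of_pow_eq_map_pow {R S : Type*} [CommRing R] [CommRing S]
    [IsDedekindDomain S] [Algebra R S] {p : Ideal R} {P : Ideal S} (hP : P.IsPrime)
    (hP0 : P ≠ ⊥) (hp0 : p.map (algebraMap R S) ≠ ⊥) {I : Ideal S} {n k : ℕ}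
    (hI : I ^ n = p.map (algebraMap R S) ^ k) (hnk : n.Coprime k) :
    n ∣ Ideal.ramificationIdx' p P := by
  classical
  have hcount : n * (normalizedFactors I).count P = k * Ideal.ramificationIdx' p P := by
    rw [Ideal.IsDedekindDomain.ramificationIdx'_eq_normalizedFactors_count hp0 hP hP0,
      ← Multiset.count_nsmul, ← Multiset.count_nsmul, ← normalizedFactors_pow,
      ← normalizedFactors_pow, hI]
  exact hnk.dvd_of_dvd_mul_left ⟨_, hcount.symm⟩

theorem odd_of_not_isSquare_pow {M : Type*} [Monoid M] {a : M} {k : ℕ}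
    (h : ¬ IsSquare (a ^ k)) : Odd k :=
  Nat.not_even_iff_odd.mp fun hk => h (hk.isSquare_pow a)

theorem ramification_even_general (p k q : ℕ) (hq : q = p ^ k)
    (hns : ¬ IsSquare q)
    (F : Type*) [Field F] [NumberField F]
    (s : F) (hs : s ^ 2 = (q : F)) :
    ∀ v : Ideal (𝓞 F), v.IsPrime →
      Ideal.comap (algebraMap ℤ (𝓞 F)) v = Ideal.span ({(p : ℤ)} : Set ℤ) →
      2 ∣ Ideal.ramificationIdx' (Ideal.span ({(p : ℤ)} : Set ℤ)) v := by
  intro v hv hcomap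
  subst hq
  have hk : Odd k := odd_of_not_isSquare_pow hns
  have hp0 : (p : 𝓞 F) ≠ 0 := by
    intro hp
    rw [Nat.cast_eq_zero.mp hp, zero_pow hk.pos.ne'] at hns
    exact hns IsSquare.zero
  have hs_int : IsIntegral ℤ s := .of_pow two_pos (hs ▸ isIntegral_natCast _)
  let t : 𝓞 F := ⟨s, hs_int⟩
  have hmap : (Ideal.span {(p : ℤ)}).map (algebraMap ℤ (𝓞 F)) = Ideal.span {(p : 𝓞 F)} := by
    rw [Ideal.map_span, Set.image_singleton, map_natCast]
  have hv0 : v ≠ ⊥ := by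
    rintro rfl
    have hmem : (p : ℤ) ∈ Ideal.comap (algebraMap ℤ (𝓞 F)) ⊥ :=
      hcomap ▸ Ideal.mem_span_singleton_self _
    exact hp0 (by simpa using hmem)
  have hsq : Ideal.span {t} ^ 2 = Ideal.span {(p : 𝓞 F)} ^ k := by
    rw [Ideal.span_singleton_pow, Ideal.span_singleton_pow]
    congr 2
    exact RingOfIntegers.ext (by push_cast at hs ⊢; exact hs)
  refine dvd_ramificationIdx'_of_pow_eq_map_pow hv hv0 ?_ (hmap ▸ hsq) hk.coprime_two_left
  rwa [hmap, ne_eq, Ideal.span_singleton_eq_bot]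

/-- Let `p` be a prime, `q` a non-square power of `p`, and `π = ζ_m^ν √q`
a supersingular `q`-number with `ℚ(π) = ℚ(π²)`.  Then for every prime `v` of the ring of
integers of `ℚ(π)` lying over `p`, the ramification index `e(v/p)` is even.
(We realize `ℚ(π)` as a number field `F` generated over `ℚ` by `π = ζ·s` with `ζ` a primitive
`m`-th root of unity and `s² = q`; the field is independent of the choice of square root.) -/
theorem ramification_even (p k q m : ℕ) (hp : p.Prime) (hq : q = p ^ k) (hk : 0 < k)
    (hns : ¬ IsSquare q) (hm : 0 < m)
    (F : Type*) [Field F] [NumberField F]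
    (ζ s π : F) (hζ : IsPrimitiveRoot ζ m) (hs : s ^ 2 = (q : F)) (hπ : π = ζ * s)
    (hgen : IntermediateField.adjoin ℚ ({π} : Set F) = ⊤)
    (hK : IntermediateField.adjoin ℚ ({π ^ 2} : Set F) = ⊤) :
    ∀ v : Ideal (𝓞 F), v.IsPrime →
      Ideal.comap (algebraMap ℤ (𝓞 F)) v = Ideal.span ({(p : ℤ)} : Set ℤ) →
      2 ∣ Ideal.ramificationIdx' (Ideal.span ({(p : ℤ)} : Set ℤ)) v :=
  ramification_even_general p k q hq hns F s hs
end

section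
/- Let p be a prime, q a power of p, m a positive integer with m not a power of 2, and let π = ζ_m^ν √q ∈ ℂ with ζ_m^ν a primitive m-th root of unity and √q > 0. Then π - 1 is a unit in the 2-adic completion ℤ[π]₂ of the order ℤ[π]. -/
open scoped TensorProduct

set_option synthInstance.maxHeartbeats 1000000
set_option maxHeartbeats 1000000

/-- Let `p` be a prime, `q` a power of `p`, `m` a positive integer that is not
a power of `2`, and `π = ζ_m^ν √q` (realized in a field `F = ℚ(π)` via `π = ζ·s`, `s² = q`).
Then `π - 1` is a unit in the 2-adic completion `ℤ[π]₂ = ℤ₂[1⊗π] ⊆ ℚ₂ ⊗_ℚ F`, i.e. its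
inverse lies in `ℤ₂[1⊗π]`. -/
theorem pi_sub_one_is_two_adic_unit (p k q m : ℕ) (hp : p.Prime) (hq : q = p ^ k)
    (hk : 0 < k) (hm : 0 < m) (hm2 : ¬ ∃ j : ℕ, m = 2 ^ j)
    (F : Type*) [Field F] [Algebra ℚ F] [FiniteDimensional ℚ F]
    (ζ s π : F) (hζ : IsPrimitiveRoot ζ m) (hs : s ^ 2 = (q : F)) (hπ : π = ζ * s) :
    ∃ x ∈ Algebra.adjoin ℤ_[2] ({(1 : ℚ_[2]) ⊗ₜ[ℚ] π} : Set (ℚ_[2] ⊗[ℚ] F)),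
      ((1 : ℚ_[2]) ⊗ₜ[ℚ] π - 1) * x = 1 := by
  classical
  -- an odd prime divisor of m
  obtain ⟨ℓ, hℓp, hℓ2, hℓm⟩ : ∃ ℓ : ℕ, ℓ.Prime ∧ ℓ ≠ 2 ∧ ℓ ∣ m := by
    by_contra h
    push_neg at h
    refine hm2 ⟨m.primeFactorsList.length, ?_⟩
    refine Nat.eq_prime_pow_of_unique_prime_dvd hm.ne' (fun {d} hd hdm => ?_)
    by_contra hd2
    exact h d hd hd2 hdm
  have hℓ3 : 3 ≤ ℓ := by
    have := hℓp.two_le; omega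
  set a : ℕ := m / ℓ with ha
  have hma : ℓ * a = m := Nat.mul_div_cancel' hℓm
  have hapos : 0 < a := Nat.div_pos (Nat.le_of_dvd hm hℓm) (by omega)
  have h2a : 2 * a < m := by
    calc 2 * a < 3 * a := by omega
      _ ≤ ℓ * a := Nat.mul_le_mul_right a hℓ3
      _ = m := hma
  set u : F := ζ ^ (2 * a) with hu
  have huℓ : u ^ ℓ = 1 := by
    rw [hu, ← pow_mul, show 2 * a * ℓ = m * 2 by rw [← hma]; ring, pow_mul,
      hζ.pow_eq_one, one_pow]
  have hune : u ≠ 1 := hζ.pow_ne_one_of_pos_of_lt (by positivity) h2a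
  have hgeo : ∑ j ∈ Finset.range ℓ, u ^ j = 0 := by
    have h1 := geom_sum_mul u ℓ
    rw [huℓ, sub_self] at h1
    rcases mul_eq_zero.mp h1 with h | h
    · exact h
    · exact absurd (sub_eq_zero.mp h) hune
  set c : ℕ := q ^ a with hc
  have hπ2 : π ^ (2 * a) = u * (c : F) := by
    rw [hπ, mul_pow, pow_mul s 2 a, hs, hc]
    push_cast
    rfl
  -- the key algebraic relation in F
  have hF : ∑ j ∈ Finset.range ℓ, (c : F) ^ (ℓ - 1 - j) * π ^ (2 * a * j) = 0 := by
    calc ∑ j ∈ Finset.range ℓ, (c : F) ^ (ℓ - 1 - j) * π ^ (2 * a * j)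
        = ∑ j ∈ Finset.range ℓ, (c : F) ^ (ℓ - 1) * u ^ j := by
          refine Finset.sum_congr rfl (fun j hj => ?_)
          have hj' : j < ℓ := Finset.mem_range.mp hj
          rw [pow_mul, hπ2, mul_pow,
            show (c : F) ^ (ℓ - 1 - j) * (u ^ j * (c : F) ^ j)
              = ((c : F) ^ (ℓ - 1 - j) * (c : F) ^ j) * u ^ j from by ring,
            ← pow_add, show ℓ - 1 - j + j = ℓ - 1 from by omega]
      _ = (c : F) ^ (ℓ - 1) * ∑ j ∈ Finset.range ℓ, u ^ j := by rw [Finset.mul_sum]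
      _ = 0 := by rw [hgeo, mul_zero]
  -- transport to ℚ₂ ⊗ F
  set t : ℚ_[2] ⊗[ℚ] F := (1 : ℚ_[2]) ⊗ₜ[ℚ] π with ht
  have hR : ∑ j ∈ Finset.range ℓ, (c : ℚ_[2] ⊗[ℚ] F) ^ (ℓ - 1 - j) * t ^ (2 * a * j) = 0 := by
    have h1 := congrArg (Algebra.TensorProduct.includeRight (R := ℚ) (A := ℚ_[2]) (B := F)) hF
    simpa [map_sum, map_mul, map_pow, map_natCast, ht] using h1
  set N : ℕ := ∑ j ∈ Finset.range ℓ, c ^ (ℓ - 1 - j) with hN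
  set B : ℚ_[2] ⊗[ℚ] F :=
    ∑ j ∈ Finset.range ℓ, (c : ℚ_[2] ⊗[ℚ] F) ^ (ℓ - 1 - j)
      * ∑ i ∈ Finset.range (2 * a * j), t ^ i with hBdef
  have hB : (t - 1) * B = -(N : ℚ_[2] ⊗[ℚ] F) := by
    calc (t - 1) * B
        = ∑ j ∈ Finset.range ℓ, (c : ℚ_[2] ⊗[ℚ] F) ^ (ℓ - 1 - j) * (t ^ (2 * a * j) - 1) := by
          rw [hBdef, Finset.mul_sum]
          refine Finset.sum_congr rfl (fun j _ => ?_)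
          rw [← mul_geom_sum]
          ring
      _ = (∑ j ∈ Finset.range ℓ, (c : ℚ_[2] ⊗[ℚ] F) ^ (ℓ - 1 - j) * t ^ (2 * a * j))
          - ∑ j ∈ Finset.range ℓ, (c : ℚ_[2] ⊗[ℚ] F) ^ (ℓ - 1 - j) := by
          rw [← Finset.sum_sub_distrib]
          exact Finset.sum_congr rfl (fun j _ => by ring)
      _ = -(N : ℚ_[2] ⊗[ℚ] F) := by
          rw [hR, zero_sub, hN]
          push_cast
          ring
  -- N is odd
  have hNmod : (N : ZMod 2) = 1 := by
    rw [hN, Nat.cast_sum]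
    rcases Nat.even_or_odd c with hce | hco
    · have hc0 : (c : ZMod 2) = 0 := by
        rw [ZMod.natCast_eq_zero_iff]
        exact hce.two_dvd
      push_cast [hc0]
      rw [Finset.sum_eq_single (ℓ - 1)]
      · rw [show ℓ - 1 - (ℓ - 1) = 0 from by omega, pow_zero]
      · intro j hj hjne
        have hj' : j < ℓ := Finset.mem_range.mp hj
        exact zero_pow (by omega)
      · intro habs
        exact absurd (Finset.mem_range.mpr (by omega)) habs
    · have hc1 : (c : ZMod 2) = 1 := by
        rw [← ZMod.natCast_mod c 2, Nat.odd_iff.mp hco]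
        norm_num
      push_cast [hc1]
      simp only [one_pow, Finset.sum_const, Finset.card_range, nsmul_eq_mul, mul_one]
      have hℓodd : ℓ % 2 = 1 := Nat.odd_iff.mp (hℓp.odd_of_ne_two hℓ2)
      rw [← ZMod.natCast_mod ℓ 2, hℓodd]
      norm_num
  have h2N : ¬ (2 ∣ N) := by
    intro hd
    rw [(ZMod.natCast_eq_zero_iff N 2).mpr hd] at hNmod
    exact zero_ne_one hNmod
  have hNu : IsUnit (N : ℤ_[2]) := by
    rw [PadicInt.isUnit_iff]
    have hle : ‖((N : ℤ) : ℤ_[2])‖ ≤ 1 := PadicInt.norm_le_one _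
    have hnlt : ¬ ‖((N : ℤ) : ℤ_[2])‖ < 1 := by
      rw [PadicInt.norm_int_lt_one_iff_dvd]
      exact_mod_cast h2N
    have : ‖((N : ℤ) : ℤ_[2])‖ = 1 := le_antisymm hle (not_lt.mp hnlt)
    simpa using this
  obtain ⟨v, hv⟩ : ∃ v : ℤ_[2], v * (N : ℤ_[2]) = 1 := hNu.exists_left_inv
  -- the inverse
  refine ⟨(algebraMap ℤ_[2] (ℚ_[2] ⊗[ℚ] F) (-v)) * B, ?_, ?_⟩
  · have htmem : t ∈ Algebra.adjoin ℤ_[2] ({t} : Set (ℚ_[2] ⊗[ℚ] F)) :=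
      Algebra.self_mem_adjoin_singleton ℤ_[2] t
    refine Subalgebra.mul_mem _ (Subalgebra.algebraMap_mem _ _) ?_
    refine Subalgebra.sum_mem _ (fun j _ => Subalgebra.mul_mem _ ?_ ?_)
    · exact Subalgebra.pow_mem _ (Subalgebra.natCast_mem _ c) _
    · exact Subalgebra.sum_mem _ (fun i _ => Subalgebra.pow_mem _ htmem i)
  · calc (t - 1) * ((algebraMap ℤ_[2] (ℚ_[2] ⊗[ℚ] F) (-v)) * B)
        = (algebraMap ℤ_[2] (ℚ_[2] ⊗[ℚ] F) (-v)) * ((t - 1) * B) := by ring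
      _ = (algebraMap ℤ_[2] (ℚ_[2] ⊗[ℚ] F) (-v)) * (-(N : ℚ_[2] ⊗[ℚ] F)) := by rw [hB]
      _ = (algebraMap ℤ_[2] (ℚ_[2] ⊗[ℚ] F) v) * (N : ℚ_[2] ⊗[ℚ] F) := by
          rw [map_neg]; ring
      _ = (algebraMap ℤ_[2] (ℚ_[2] ⊗[ℚ] F) v)
          * (algebraMap ℤ_[2] (ℚ_[2] ⊗[ℚ] F) ((N : ℤ_[2]))) := by rw [map_natCast]
      _ = algebraMap ℤ_[2] (ℚ_[2] ⊗[ℚ] F) (v * (N : ℤ_[2])) := (map_mul _ _ _).symm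
      _ = 1 := by rw [hv, map_one]
end

section
/- Let R be a commutative ring, r ∈ R with R/rR finite, and let M be an R-module on which r acts injectively, containing a free submodule R^s of finite index on which r also acts injectively. Then the cardinality of M/rM equals (#(R/rR))^s. -/
open Submodule

private lemma aux_smul_top_toAddSubgroup {R V : Type*} [CommRing R] [AddCommGroup V] [Module R V]
    (r : R) :
    (Ideal.span ({r} : Set R) • (⊤ : Submodule R V)).toAddSubgroup
      = AddSubgroup.map (DistribMulAction.toAddMonoidHom V r) ⊤ := by
  rw [Submodule.ideal_span_singleton_smul]
  ext x
  simp only [Submodule.mem_toAddSubgroup, AddSubgroup.mem_map, AddSubgroup.mem_top, true_and]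
  constructor
  · rintro hx
    rcases Set.mem_smul_set.mp hx with ⟨y, -, rfl⟩
    exact ⟨y, rfl⟩
  · rintro ⟨y, rfl⟩
    exact Set.smul_mem_smul_set (Submodule.mem_top)

/-- Let `R` be a commutative ring, `r ∈ R` with `R/rR` finite, and `M` an
`R`-module on which `r` acts injectively, containing a free submodule `R^s` of finite index
(on which `r` then also acts injectively). Then `#(M/rM) = #(R/rR)^s`. -/
theorem card_quotient_smul_eq_pow {R M : Type*} [CommRing R] [AddCommGroup M] [Module R M]
    (r : R) (s : ℕ) (hRfin : Finite (R ⧸ Ideal.span ({r} : Set R)))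
    (hinj : Function.Injective fun m : M => r • m)
    (f : (Fin s → R) →ₗ[R] M) (hf : Function.Injective f)
    (hfin : Finite (M ⧸ LinearMap.range f)) :
    Nat.card (M ⧸ (Ideal.span ({r} : Set R) • (⊤ : Submodule R M))) =
      Nat.card (R ⧸ Ideal.span ({r} : Set R)) ^ s := by
  classical
  set I : Ideal R := Ideal.span ({r} : Set R)
  let φ : M →+ M := DistribMulAction.toAddMonoidHom M r
  let σ : (Fin s → R) →+ (Fin s → R) := DistribMulAction.toAddMonoidHom (Fin s → R) r
  let ψ : (Fin s → R) →+ M := f.toAddMonoidHom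
  have hφ : Function.Injective φ := hinj
  have hψ : Function.Injective ψ := hf
  set N : AddSubgroup M := (LinearMap.range f).toAddSubgroup with hN
  have hNmap : N = AddSubgroup.map ψ ⊤ := by
    ext x
    simp [hN, LinearMap.mem_range, ψ]
  -- the two images coincide
  have hcomm : AddSubgroup.map φ N = AddSubgroup.map ψ (AddSubgroup.map σ ⊤) := by
    rw [hNmap]
    ext x
    simp only [AddSubgroup.mem_map, AddSubgroup.mem_top, true_and]
    constructor
    · rintro ⟨z, ⟨w, rfl⟩, rfl⟩
      refine ⟨r • w, ⟨w, rfl⟩, ?_⟩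
      show f (r • w) = r • f w
      exact f.map_smul r w
    · rintro ⟨z, ⟨w, rfl⟩, rfl⟩
      refine ⟨f w, ⟨w, rfl⟩, ?_⟩
      show r • f w = f (r • w)
      exact (f.map_smul r w).symm
  have h1 : (AddSubgroup.map φ N).index = N.index * φ.range.index :=
    AddSubgroup.index_map_of_injective N hφ
  have h2 : (AddSubgroup.map ψ (AddSubgroup.map σ ⊤)).index
      = (AddSubgroup.map σ ⊤).index * ψ.range.index :=
    AddSubgroup.index_map_of_injective _ hψ
  have hrange : ψ.range.index = N.index := by
    rw [hNmap, AddMonoidHom.range_eq_map]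
  have hNfin : N.index ≠ 0 := by
    have : Finite (M ⧸ N) := hfin
    simpa [AddSubgroup.index] using Nat.card_pos.ne'
  -- compute the index of r • (R^s)
  have hpi : (I • (⊤ : Submodule R (Fin s → R)))
      = Submodule.pi Set.univ (fun _ : Fin s => I) := by
    rw [Submodule.ideal_span_singleton_smul]
    ext x
    simp only [Submodule.mem_pi, Set.mem_univ, forall_true_left]
    constructor
    · intro hx
      rcases Set.mem_smul_set.mp hx with ⟨y, -, rfl⟩
      intro i
      exact Ideal.mem_span_singleton.mpr ⟨y i, rfl⟩
    · intro hx
      have : ∀ i, ∃ c, x i = r * c := by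
        intro i
        rcases Ideal.mem_span_singleton.mp (hx i) with ⟨c, hc⟩
        exact ⟨c, hc⟩
      choose y hy using this
      have : x = r • y := by
        funext i
        simp [hy i, Pi.smul_apply, smul_eq_mul]
      rw [this]
      exact Set.smul_mem_smul_set Submodule.mem_top
  have hQcard : Nat.card ((Fin s → R) ⧸ (I • (⊤ : Submodule R (Fin s → R))))
      = Nat.card (R ⧸ I) ^ s := by
    rw [hpi]
    rw [Nat.card_congr (Submodule.quotientPi (fun _ : Fin s => I)).toEquiv]
    simp [Nat.card_pi]
  have hQindex : (AddSubgroup.map σ ⊤).index = Nat.card (R ⧸ I) ^ s := by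
    rw [← aux_smul_top_toAddSubgroup (R := R) (V := Fin s → R) r]
    exact hQcard
  have hgoal : Nat.card (M ⧸ (I • (⊤ : Submodule R M))) = φ.range.index := by
    show (I • (⊤ : Submodule R M)).toAddSubgroup.index = _
    rw [aux_smul_top_toAddSubgroup (R := R) (V := M) r, ← AddMonoidHom.range_eq_map]
  rw [hgoal]
  have key : N.index * φ.range.index = Nat.card (R ⧸ I) ^ s * N.index := by
    rw [← h1, hcomm, h2, hrange, hQindex]
  have := key.trans (mul_comm _ _)
  exact Nat.eq_of_mul_eq_mul_left (Nat.pos_of_ne_zero hNfin) this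
end

section
/- Let R be a commutative ring, r ∈ R with R/rR finite, and let M' ⊆ M'' be R-modules on which r acts injectively, each containing a free R-submodule of rank s with finite index, and with M''/M' finite. Then there is an R-module homomorphism ρ: M'/rM' → M''/rM'' whose kernel and cokernel have the same cardinality, and this cardinality divides #(M''/M'). -/
lemma mem_span_smul_top {R M : Type*} [CommRing R] [AddCommGroup M] [Module R M]
    (r : R) (x : M) :
    x ∈ Ideal.span ({r} : Set R) • (⊤ : Submodule R M) ↔ ∃ m : M, r • m = x := by
  constructor
  · intro hx
    refine Submodule.smul_induction_on hx (fun a ha n _ => ?_) ?_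
    · obtain ⟨c, rfl⟩ := Ideal.mem_span_singleton'.mp ha
      exact ⟨c • n, by rw [smul_smul, mul_comm]⟩
    · rintro x y ⟨m, rfl⟩ ⟨m', rfl⟩
      exact ⟨m + m', by rw [smul_add]⟩
  · rintro ⟨m, rfl⟩
    exact Submodule.smul_mem_smul (Ideal.subset_span rfl) trivial

/-- Let `R` be a commutative ring, `r ∈ R` with `R/rR` finite, and `N ⊆ M`
`R`-modules on which `r` acts injectively, each containing a free `R`-submodule of rank `s`
with finite index, and with `M/N` finite. Then there is an `R`-module homomorphism
`ρ : N/rN → M/rM` whose kernel and cokernel have the same cardinality, dividing `#(M/N)`. -/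
theorem exists_hom_ker_coker_card {R M : Type*} [CommRing R] [AddCommGroup M] [Module R M]
    (r : R) (s : ℕ) (hRfin : Finite (R ⧸ Ideal.span ({r} : Set R)))
    (N : Submodule R M)
    (hinj : Function.Injective fun m : M => r • m)
    (f : (Fin s → R) →ₗ[R] ↥N) (hf : Function.Injective f)
    (hfin : Finite (↥N ⧸ LinearMap.range f))
    (g : (Fin s → R) →ₗ[R] M) (hg : Function.Injective g)
    (hgfin : Finite (M ⧸ LinearMap.range g))
    (hquot : Finite (M ⧸ N)) :
    ∃ ρ : (↥N ⧸ (Ideal.span ({r} : Set R) • (⊤ : Submodule R ↥N))) →ₗ[R]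
        (M ⧸ (Ideal.span ({r} : Set R) • (⊤ : Submodule R M))),
      Nat.card (LinearMap.ker ρ) =
        Nat.card ((M ⧸ (Ideal.span ({r} : Set R) • (⊤ : Submodule R M))) ⧸
          LinearMap.range ρ) ∧
      Nat.card (LinearMap.ker ρ) ∣ Nat.card (M ⧸ N) := by
  classical
  set I := Ideal.span ({r} : Set R) with hI
  set rM : Submodule R M := I • ⊤ with hrM
  set rN : Submodule R ↥N := I • ⊤ with hrN
  have hinj' : ∀ {a b : M}, r • a = r • b → a = b := fun h => hinj h
  -- the induced map
  have hle : rN ≤ Submodule.comap N.subtype rM := by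
    intro x hx
    obtain ⟨m, hm⟩ := (mem_span_smul_top r x).mp hx
    exact (mem_span_smul_top r (x : M)).mpr ⟨(m : M), by
      simpa using congrArg (Subtype.val) hm⟩
  set ρ := Submodule.mapQ rN rM N.subtype hle with hρ
  -- multiplication by r on M ⧸ N
  set φ : (M ⧸ N) →ₗ[R] (M ⧸ N) := LinearMap.lsmul R (M ⧸ N) r with hφ
  have hφa : ∀ q : M ⧸ N, φ q = r • q := fun _ => rfl
  -- K = preimage in N of rM
  set K : Submodule R ↥N := Submodule.comap N.subtype rM with hK
  have hu : ∀ k : K, ∃ m : M, r • m = ((k : ↥N) : M) := fun k =>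
    (mem_span_smul_top r _).mp k.2
  choose u hum using hu
  -- the map K → M ⧸ N, k ↦ class of u k
  set α0 : K →ₗ[R] (M ⧸ N) :=
    { toFun := fun k => N.mkQ (u k)
      map_add' := fun k k' => by
        have h : u (k + k') = u k + u k' := hinj' (by rw [hum, smul_add, hum, hum]; rfl)
        show N.mkQ (u (k + k')) = N.mkQ (u k) + N.mkQ (u k')
        rw [h, map_add]
      map_smul' := fun c k => by
        have h : u (c • k) = c • u k := hinj' (by rw [hum, smul_comm, hum]; rfl)
        show N.mkQ (u (c • k)) = c • N.mkQ (u k)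
        rw [h, map_smul] } with hα0
  set β0 : K →ₗ[R] (↥N ⧸ rN) := rN.mkQ.comp K.subtype with hβ0
  -- kernels agree
  have hker : LinearMap.ker α0 = LinearMap.ker β0 := by
    ext k
    have hα : α0 k = N.mkQ (u k) := rfl
    have hβ : β0 k = rN.mkQ (k : ↥N) := rfl
    rw [LinearMap.mem_ker, LinearMap.mem_ker, hα, hβ, Submodule.mkQ_apply,
      Submodule.mkQ_apply, Submodule.Quotient.mk_eq_zero, Submodule.Quotient.mk_eq_zero]
    constructor
    · intro h
      refine (mem_span_smul_top r ((k : ↥N))).mpr ⟨⟨u k, h⟩, ?_⟩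
      ext
      exact hum k
    · intro h
      obtain ⟨n, hn⟩ := (mem_span_smul_top r ((k : ↥N))).mp h
      have h2 : u k = (n : M) := hinj' (by rw [hum]; exact (congrArg Subtype.val hn).symm)
      rw [h2]
      exact n.2
  -- range of β0 is ker ρ
  have hrβ : LinearMap.range β0 = LinearMap.ker ρ := by
    ext y
    obtain ⟨x, rfl⟩ := Submodule.Quotient.mk_surjective rN y
    rw [LinearMap.mem_range, LinearMap.mem_ker, hρ, Submodule.mapQ_apply,
      Submodule.Quotient.mk_eq_zero]
    constructor
    · rintro ⟨k, hk⟩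
      have hk' : β0 k = rN.mkQ (k : ↥N) := rfl
      rw [hk', Submodule.mkQ_apply] at hk
      have hx : x - (k : ↥N) ∈ rN := (Submodule.Quotient.eq rN).mp hk.symm
      have h1 : ((x - (k : ↥N) : ↥N) : M) ∈ rM := hle hx
      have hk2 : ((k : ↥N) : M) ∈ rM := k.2
      have := rM.add_mem h1 hk2
      simpa using this
    · intro hx
      exact ⟨⟨x, hx⟩, rfl⟩
  -- range of α0 is ker φ
  have hrα : LinearMap.range α0 = LinearMap.ker φ := by
    ext q
    rw [LinearMap.mem_range, LinearMap.mem_ker]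
    constructor
    · rintro ⟨k, rfl⟩
      have hα : α0 k = N.mkQ (u k) := rfl
      rw [hα, hφa, ← map_smul, hum, Submodule.mkQ_apply, Submodule.Quotient.mk_eq_zero]
      exact ((k : ↥N)).2
    · intro hq
      obtain ⟨m, rfl⟩ := Submodule.Quotient.mk_surjective N q
      rw [hφa] at hq
      have hrm : r • m ∈ N := (Submodule.Quotient.mk_eq_zero N).mp
        (by rw [Submodule.Quotient.mk_smul]; exact hq)
      have hmem : (⟨r • m, hrm⟩ : ↥N) ∈ K :=
        (mem_span_smul_top r (r • m)).mpr ⟨m, rfl⟩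
      refine ⟨⟨⟨r • m, hrm⟩, hmem⟩, ?_⟩
      have h2 : u ⟨⟨r • m, hrm⟩, hmem⟩ = m := hinj' (by rw [hum])
      show N.mkQ (u ⟨⟨r • m, hrm⟩, hmem⟩) = Submodule.Quotient.mk m
      rw [h2, Submodule.mkQ_apply]
  -- card ker ρ = card ker φ
  have hcard_ker : Nat.card (LinearMap.ker ρ) = Nat.card (LinearMap.ker φ) := by
    rw [← hrβ, ← hrα]
    have e1 := (LinearMap.quotKerEquivRange β0).toEquiv
    have e2 := (LinearMap.quotKerEquivRange α0).toEquiv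
    rw [← Nat.card_congr e1, ← Nat.card_congr e2, hker]
  -- range ρ = map of N
  have hrρ : LinearMap.range ρ = N.map rM.mkQ := by
    have h1 : LinearMap.range ρ = LinearMap.range (ρ.comp rN.mkQ) := by
      rw [LinearMap.range_comp, Submodule.range_mkQ, Submodule.map_top]
    rw [h1, hρ, Submodule.mapQ_mkQ, LinearMap.range_comp, Submodule.range_subtype]
  -- range φ = map of rM
  have hrφ : LinearMap.range φ = rM.map N.mkQ := by
    ext q
    rw [LinearMap.mem_range, Submodule.mem_map]
    constructor
    · rintro ⟨p, rfl⟩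
      obtain ⟨m, rfl⟩ := Submodule.Quotient.mk_surjective N p
      refine ⟨r • m, (mem_span_smul_top r _).mpr ⟨m, rfl⟩, ?_⟩
      rw [hφa, Submodule.mkQ_apply, Submodule.Quotient.mk_smul]
    · rintro ⟨x, hx, rfl⟩
      obtain ⟨m, rfl⟩ := (mem_span_smul_top r x).mp hx
      refine ⟨Submodule.Quotient.mk m, ?_⟩
      rw [hφa, Submodule.mkQ_apply, Submodule.Quotient.mk_smul]
  -- cokernels have equal card
  have hcoker : Nat.card ((M ⧸ rM) ⧸ LinearMap.range ρ)
      = Nat.card ((M ⧸ N) ⧸ LinearMap.range φ) := by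
    rw [hrρ, hrφ]
    have e1 := (Submodule.quotientQuotientEquivQuotientSup rM N).toEquiv
    have e2 := (Submodule.quotientQuotientEquivQuotientSup N rM).toEquiv
    rw [Nat.card_congr e1, Nat.card_congr e2, sup_comm]
  -- counting over the finite module M ⧸ N
  have hQ1 : Nat.card (M ⧸ N)
      = Nat.card (LinearMap.ker φ) * Nat.card ((M ⧸ N) ⧸ LinearMap.ker φ) :=
    Submodule.card_eq_card_quotient_mul_card _
  have hQ2 : Nat.card (M ⧸ N)
      = Nat.card (LinearMap.range φ) * Nat.card ((M ⧸ N) ⧸ LinearMap.range φ) :=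
    Submodule.card_eq_card_quotient_mul_card _
  have hfirst : Nat.card ((M ⧸ N) ⧸ LinearMap.ker φ) = Nat.card (LinearMap.range φ) :=
    Nat.card_congr (LinearMap.quotKerEquivRange φ).toEquiv
  have hpos : 0 < Nat.card (LinearMap.range φ) := by
    have : Finite (LinearMap.range φ) := Subtype.finite
    exact Nat.card_pos
  have hkc : Nat.card (LinearMap.ker φ)
      = Nat.card ((M ⧸ N) ⧸ LinearMap.range φ) := by
    have h := hQ1.symm.trans hQ2
    rw [hfirst] at h
    exact Nat.eq_of_mul_eq_mul_left hpos (by rw [mul_comm, h, mul_comm])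
  refine ⟨ρ, ?_, ?_⟩
  · rw [hcard_ker, hkc, ← hcoker]
  · rw [hcard_ker, hkc, hQ2]
    exact dvd_mul_left _ _
end

section
/- Let A be a simple supersingular abelian variety of odd dimension d > 2 over a finite field k with Frobenius π and characteristic polynomial f = g^e (g irreducible). Then e = 1, i.e., f is irreducible, and consequently End_k(A) ⊗ ℚ = ℚ(π) is commutative; the argument reduces to: if 2d = e·[ℚ(π):ℚ] with d odd, d > 2, and π a supersingular q-number, then [ℚ(π):ℚ] is even or [ℚ(π):ℚ(π²)]·φ(m/gcd(2,m)) is even, forcing e = 1. -/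
/-!
Since `π² = q ζ²` with `q` a nonzero rational, `ℚ(π²) = ℚ(ζ²)` is cyclotomic, of degree
`φ(m / gcd(m, 2))`, and `[ℚ(π) : ℚ(π²)] ≤ 2`. If `e = 2` then `[ℚ(π) : ℚ] = d` is odd, so the
totient factor is odd, hence equal to `1`, and `d ≤ 2`.
-/

open IntermediateField Module Polynomial

theorem IsPrimitiveRoot.pow_div_gcd {M : Type*} [CommMonoid M] {ζ : M} {k i : ℕ}
    (h : IsPrimitiveRoot ζ k) (hi : i ≠ 0) : IsPrimitiveRoot (ζ ^ i) (k / k.gcd i) := by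
  rw [h.eq_orderOf, ← orderOf_pow' ζ hi]
  exact IsPrimitiveRoot.orderOf _

theorem IsPrimitiveRoot.finrank_adjoin_rat {K : Type*} [Field K] [CharZero K] {μ : K} {n : ℕ}
    (h : IsPrimitiveRoot μ n) (hn : 0 < n) : finrank ℚ ℚ⟮μ⟯ = n.totient := by
  rw [adjoin.finrank (h.isIntegral hn).tower_top, ← cyclotomic_eq_minpoly_rat h hn,
    natDegree_cyclotomic]

theorem Nat.totient_eq_one_of_odd {n : ℕ} (h : Odd n.totient) : n.totient = 1 := by
  rcases Nat.lt_or_ge 2 n with hn | hn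
  · exact absurd (Nat.totient_even hn) (Nat.not_even_iff_odd.mpr h)
  · interval_cases n <;> simp_all

namespace IntermediateField

variable {F E : Type*} [Field F] [Field E] [Algebra F E]

theorem adjoin_simple_mul_algebraMap (x : E) {c : F} (hc : c ≠ 0) :
    F⟮x * algebraMap F E c⟯ = F⟮x⟯ := by
  have hx : x ∈ F⟮x⟯ := mem_adjoin_simple_self F x
  have hxc : x * algebraMap F E c ∈ F⟮x * algebraMap F E c⟯ := mem_adjoin_simple_self F _
  refine le_antisymm ?_ ?_ <;> rw [adjoin_simple_le_iff]
  · exact mul_mem hx (algebraMap_mem _ c)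
  · simpa [mul_assoc, ← map_mul, hc] using mul_mem hxc (algebraMap_mem _ c⁻¹)

theorem adjoin_simple_pow_le (x : E) (n : ℕ) : F⟮x ^ n⟯ ≤ F⟮x⟯ :=
  adjoin_simple_le_iff.mpr (pow_mem (mem_adjoin_simple_self F x) n)

theorem relfinrank_adjoin_simple_pow_le (x : E) {n : ℕ} (hn : n ≠ 0) :
    relfinrank F⟮x ^ n⟯ F⟮x⟯ ≤ n := by
  set K := F⟮x ^ n⟯
  let c : K := ⟨x ^ n, mem_adjoin_simple_self F _⟩
  have hmonic : (X ^ n - C c).Monic := monic_X_pow_sub_C c hn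
  have hroot : aeval x (X ^ n - C c) = 0 := by simp [c]
  have hint : IsIntegral K x := ⟨_, hmonic, hroot⟩
  rw [relfinrank_eq_finrank_of_le (adjoin_simple_pow_le x n), extendScalars_adjoin,
    adjoin.finrank hint]
  simpa using natDegree_le_of_dvd (minpoly.dvd K x hroot) hmonic.ne_zero

end IntermediateField

theorem finrank_adjoin_le_two_of_odd {K : Type*} [Field K] [CharZero K] {x ζ : K} {n : ℕ}
    (hζ : IsPrimitiveRoot ζ n) (hn : 0 < n) (hx : ℚ⟮x ^ 2⟯ = ℚ⟮ζ⟯)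
    (hodd : Odd (finrank ℚ ℚ⟮x⟯)) : finrank ℚ ℚ⟮x⟯ ≤ 2 := by
  have hrel := relfinrank_adjoin_simple_pow_le (F := ℚ) x two_ne_zero
  have htower := finrank_bot_mul_relfinrank (adjoin_simple_pow_le (F := ℚ) x 2)
  rw [hx] at hrel htower
  rw [hζ.finrank_adjoin_rat hn] at htower
  rw [← htower] at hodd ⊢
  rwa [Nat.totient_eq_one_of_odd (Nat.odd_mul.mp hodd).1, one_mul]

theorem e_eq_one_of_odd_dim_general (p k q m d e : ℕ) (hp : p.Prime) (hq : q = p ^ k)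
    (hm : 0 < m) (ζ : ℂ) (hζ : IsPrimitiveRoot ζ m)
    (π : ℂ) (hπ : π = ζ * (Real.sqrt q : ℂ))
    (hd : Odd d) (hd2 : 2 < d) (he : e = 1 ∨ e = 2)
    (heq : 2 * d = e * Module.finrank ℚ ↥(IntermediateField.adjoin ℚ ({π} : Set ℂ))) :
    e = 1 := by
  have hq0 : (q : ℚ) ≠ 0 := by rw [hq]; exact_mod_cast pow_ne_zero k hp.ne_zero
  have hπsq : π ^ 2 = ζ ^ 2 * algebraMap ℚ ℂ q := by
    rw [hπ, mul_pow, ← Complex.ofReal_pow, Real.sq_sqrt q.cast_nonneg]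
    simp
  have hdeg := finrank_adjoin_le_two_of_odd (hζ.pow_div_gcd two_ne_zero)
    (Nat.div_pos (Nat.gcd_le_left 2 hm) (Nat.gcd_pos_of_pos_left 2 hm))
    (by rw [hπsq, adjoin_simple_mul_algebraMap _ hq0])
  obtain rfl | rfl := he
  · rfl
  · have hdE : finrank ℚ ℚ⟮π⟯ = d := by omega
    have := hdeg (hdE ▸ hd)
    omega

/-- Let `A` be a simple supersingular abelian variety of odd dimension `d > 2`
over a finite field `k` with Frobenius `π = ζ_m^ν √q` and characteristic polynomial `f = g^e`.
Then `e = 1`.  The argument reduces to the following arithmetic statement: if `2d = e·[ℚ(π):ℚ]`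
with `d` odd, `d > 2`, `e ∈ {1,2}` (as always holds for a simple abelian variety over a finite
field), and `π` a supersingular `q`-number, then `[ℚ(π):ℚ]` is even, forcing `e = 1`. -/
theorem e_eq_one_of_odd_dim (p k q m d e : ℕ) (hp : p.Prime) (hq : q = p ^ k) (hk : 0 < k)
    (hm : 0 < m) (ζ : ℂ) (hζ : IsPrimitiveRoot ζ m)
    (π : ℂ) (hπ : π = ζ * (Real.sqrt q : ℂ))
    (hd : Odd d) (hd2 : 2 < d) (he : e = 1 ∨ e = 2)
    (heq : 2 * d = e * Module.finrank ℚ ↥(IntermediateField.adjoin ℚ ({π} : Set ℂ))) :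
    e = 1 :=
  e_eq_one_of_odd_dim_general p k q m d e hp hq hm ζ hζ π hπ hd hd2 he heq
end
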